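/- arXiv:1109.1150 — 3 statements merged into one kernel-verified Lean document; each statement's English description precedes it below -/
import Mathlib

section
/- If G is a maximal outerplanar graph on n ≥ 3 vertices, then the vertices of degree 3 in G induce a bipartite graph. -/
/-- `D` is a `k`-fair dominating set of `G`: a dominating set such that every
vertex outside `D` has exactly `k` neighbors in `D`. -/
def IsKFDSet {V : Type*} (G : SimpleGraph V) (k : ℕ) (D : Set V) : Prop :=
  (∀ v ∉ D, ∃ u ∈ D, G.Adj u v) ∧ ∀ v ∉ D, (G.neighborSet v ∩ D).ncard = k

/-- `D` is a fair dominating set of `G`: a `k`-fair dominating set for some `k ≥ 1`. -/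
def IsFDSet {V : Type*} (G : SimpleGraph V) (D : Set V) : Prop :=
  ∃ k ≥ 1, IsKFDSet G k D

/-- The fair domination number of `G`. -/
noncomputable def fd {V : Type*} (G : SimpleGraph V) : ℕ :=
  sInf {m | ∃ D : Set V, IsFDSet G D ∧ D.ncard = m}

/-- The 1-fair domination number of `G`. -/
noncomputable def fd1 {V : Type*} (G : SimpleGraph V) : ℕ :=
  sInf {m | ∃ D : Set V, IsKFDSet G 1 D ∧ D.ncard = m}

/-- `Q` is an out-regular set: all its vertices have the same positive number of
neighbors outside `Q`. -/
def IsORSet {V : Type*} (G : SimpleGraph V) (Q : Set V) : Prop :=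
  ∃ k ≥ 1, ∀ u ∈ Q, (G.neighborSet u \ Q).ncard = k

/-- The out-regular number of `G`. -/
noncomputable def outr {V : Type*} (G : SimpleGraph V) : ℕ :=
  sSup {m | ∃ Q : Set V, IsORSet G Q ∧ Q.ncard = m}

/-- The domination number of `G`. -/
noncomputable def domNum {V : Type*} (G : SimpleGraph V) : ℕ :=
  sInf {m | ∃ D : Set V, (∀ v ∉ D, ∃ u ∈ D, G.Adj u v) ∧ D.ncard = m}

/-- The corona of a graph `H`: attach one new pendant leaf to each vertex of `H`. -/
def corona {α : Type*} (H : SimpleGraph α) : SimpleGraph (α ⊕ α) :=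
  SimpleGraph.fromRel (fun a b =>
    match a, b with
    | Sum.inl x, Sum.inl y => H.Adj x y
    | Sum.inl x, Sum.inr y => x = y
    | _, _ => False)

/-- `T` is (isomorphic to) the corona of a tree. -/
def IsCoronaOfTree {V : Type*} (T : SimpleGraph V) : Prop :=
  ∃ (α : Type) (_ : Fintype α) (H : SimpleGraph α), H.IsTree ∧ Nonempty (T ≃g corona H)

/-- `G` is a maximal outerplanar graph (MOP) on `n + 3` vertices: a triangulation of a
polygon. The vertices are placed on a cycle `0, 1, ..., n + 2`; `G` contains all the
polygon edges, no two edges of `G` cross (with respect to this cyclic placement), and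
`G` has exactly `2(n+3) - 3` edges, i.e. the polygon is fully triangulated. -/
def IsMOP {n : ℕ} (G : SimpleGraph (Fin (n + 3))) : Prop :=
  (∀ i : Fin (n + 3), G.Adj i (i + 1)) ∧
  (∀ a b c d : Fin (n + 3), G.Adj a b → G.Adj c d → ¬(a < c ∧ c < b ∧ b < d)) ∧
  G.edgeSet.ncard = 2 * (n + 3) - 3


section MOPProof
open Fin.CommRing

/-- Chord-count bound: a noncrossing family of "long" chords on points `a..b` has
at most `b - a - 1` members. -/
lemma chordBound : ∀ (d a b : ℕ) (P : Set (ℕ × ℕ)),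
    b - a ≤ d →
    (∀ p ∈ P, a ≤ p.1 ∧ p.1 + 2 ≤ p.2 ∧ p.2 ≤ b) →
    (∀ p ∈ P, ∀ q ∈ P, ¬(p.1 < q.1 ∧ q.1 < p.2 ∧ p.2 < q.2)) →
    P.ncard ≤ b - a - 1 := by
  intro d
  induction d with
  | zero =>
    intro a b P hd hP _
    have : P = ∅ := by
      ext p; simp only [Set.mem_empty_iff_false, iff_false]
      intro hp; have := hP p hp; omega
    simp [this]
  | succ d ih =>
    intro a b P hd hP hNC
    have hPfin : P.Finite := by
      apply Set.Finite.subset ((Set.finite_Icc a b).prod (Set.finite_Icc a b))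
      intro p hp
      obtain ⟨h1, h2, h3⟩ := hP p hp
      exact ⟨⟨h1, by omega⟩, ⟨by omega, h3⟩⟩
    rcases P.eq_empty_or_nonempty with rfl | ⟨p0, hp0⟩
    · simp
    have hab : a + 2 ≤ b := by have := hP p0 hp0; omega
    by_cases hP' : (P \ {(a, b)}).Nonempty
    · have hFfin : (P \ {(a, b)}).Finite := hPfin.subset Set.diff_subset
      obtain ⟨q, hq, hmax⟩ := Finset.exists_max_image hFfin.toFinset
        (fun p => p.2 - p.1) (by simpa [Set.Finite.toFinset_nonempty] using hP')
      rw [Set.Finite.mem_toFinset] at hq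
      have hqP : q ∈ P := hq.1
      have hqne : q ≠ (a, b) := by simpa using hq.2
      have hqc := hP q hqP
      have hqab : a < q.1 ∨ q.2 < b := by
        by_contra h; push_neg at h
        exact hqne (Prod.ext_iff.2 ⟨by omega, by omega⟩)
      set A := {p ∈ P | p.2 ≤ q.1} with hA
      set B := {p ∈ P | q.1 ≤ p.1 ∧ p.2 ≤ q.2} with hB
      set D := {p ∈ P | q.2 ≤ p.1} with hD
      have hsub : P ⊆ insert (a, b) (A ∪ B ∪ D) := by
        intro p hp
        by_cases hpe : p = (a, b)
        · exact Or.inl hpe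
        have hmp := hmax p (by rw [Set.Finite.mem_toFinset]; exact ⟨hp, by simpa using hpe⟩)
        have h1 := hNC p hp q hqP
        have h2 := hNC q hqP p hp
        have hcp := hP p hp
        simp only [Set.mem_insert_iff, Set.mem_union, hA, hB, hD, Set.mem_setOf_eq]
        right
        rcases le_or_gt p.2 q.1 with h | h
        · exact Or.inl (Or.inl ⟨hp, h⟩)
        rcases le_or_gt q.2 p.1 with h' | h'
        · exact Or.inr ⟨hp, h'⟩
        refine Or.inl (Or.inr ⟨hp, ?_, ?_⟩) <;> omega
      have hAcard : A.ncard ≤ q.1 - a - 1 :=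
        ih a q.1 A (by omega) (fun p hp => ⟨(hP p hp.1).1, (hP p hp.1).2.1, hp.2⟩)
          (fun p hp r hr => hNC p hp.1 r hr.1)
      have hBcard : B.ncard ≤ q.2 - q.1 - 1 :=
        ih q.1 q.2 B (by omega) (fun p hp => ⟨hp.2.1, (hP p hp.1).2.1, hp.2.2⟩)
          (fun p hp r hr => hNC p hp.1 r hr.1)
      have hDcard : D.ncard ≤ b - q.2 - 1 :=
        ih q.2 b D (by omega) (fun p hp => ⟨hp.2, (hP p hp.1).2.1, (hP p hp.1).2.2⟩)
          (fun p hp r hr => hNC p hp.1 r hr.1)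
      have hins : (insert (a, b) (A ∪ B ∪ D)).Finite := by
        apply Set.Finite.insert
        exact (hPfin.subset (fun p hp => by
          rcases hp with (⟨h,_⟩|⟨h,_⟩)|⟨h,_⟩ <;> exact h))
      calc P.ncard ≤ (insert (a, b) (A ∪ B ∪ D)).ncard := Set.ncard_le_ncard hsub hins
        _ ≤ (A ∪ B ∪ D).ncard + 1 := Set.ncard_insert_le _ _
        _ ≤ ((A ∪ B).ncard + D.ncard) + 1 := by
            have := Set.ncard_union_le (A ∪ B) D; omega
        _ ≤ ((A.ncard + B.ncard) + D.ncard) + 1 := by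
            have := Set.ncard_union_le A B; omega
        _ ≤ b - a - 1 := by omega
    · have hsub : P ⊆ {(a, b)} := by
        intro p hp; by_contra h
        exact hP' ⟨p, hp, h⟩
      have := Set.ncard_le_ncard hsub (Set.finite_singleton _)
      simp only [Set.ncard_singleton] at this
      omega

/-- Noncrossing graphs on points `a..b` have at most `2(b-a+1) - 3` edges. -/
lemma natBound (a b : ℕ) (P : Set (ℕ × ℕ))
    (hP : ∀ p ∈ P, a ≤ p.1 ∧ p.1 < p.2 ∧ p.2 ≤ b)
    (hNC : ∀ p ∈ P, ∀ q ∈ P, ¬(p.1 < q.1 ∧ q.1 < p.2 ∧ p.2 < q.2)) :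
    P.ncard ≤ 2 * (b - a + 1) - 3 := by
  set Pc := {p ∈ P | p.2 = p.1 + 1} with hPc
  set Pd := {p ∈ P | p.1 + 2 ≤ p.2} with hPd
  have hsplit : P = Pc ∪ Pd := by
    ext p
    simp only [hPc, hPd, Set.mem_union, Set.mem_setOf_eq]
    constructor
    · intro hp; have := hP p hp
      rcases le_or_gt (p.1 + 2) p.2 with h | h
      · exact Or.inr ⟨hp, h⟩
      · exact Or.inl ⟨hp, by omega⟩
    · rintro (⟨h, _⟩ | ⟨h, _⟩) <;> exact h
  have hc : Pc.ncard ≤ b - a := by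
    have hinj : Set.InjOn Prod.fst Pc := by
      intro p hp r hr h
      exact Prod.ext_iff.2 ⟨h, by rw [hp.2, hr.2, h]⟩
    have himg : Prod.fst '' Pc ⊆ Set.Ico a b := by
      rintro x ⟨p, hp, rfl⟩
      have := hP p hp.1
      exact ⟨this.1, by omega⟩
    calc Pc.ncard = (Prod.fst '' Pc).ncard := (Set.ncard_image_of_injOn hinj).symm
      _ ≤ (Set.Ico a b).ncard := Set.ncard_le_ncard himg (Set.finite_Ico a b)
      _ = b - a := by rw [← Finset.coe_Ico, Set.ncard_coe_finset, Nat.card_Ico]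
  have hd : Pd.ncard ≤ b - a - 1 :=
    chordBound (b - a) a b Pd le_rfl
      (fun p hp => ⟨(hP p hp.1).1, hp.2, (hP p hp.1).2.2⟩)
      (fun p hp r hr => hNC p hp.1 r hr.1)
  rcases le_or_gt b a with h | h
  · have : P = ∅ := by
      ext p; simp only [Set.mem_empty_iff_false, iff_false]
      intro hp; have := hP p hp; omega
    simp [this]
  · have := Set.ncard_union_le Pc Pd
    rw [hsplit]; omega

section FinHelp
variable {n : ℕ}

lemma val_add_lt (x r : Fin (n + 3)) (h : x.val + r.val < n + 3) :
    (x + r).val = x.val + r.val := by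
  rw [Fin.add_def]; exact Nat.mod_eq_of_lt h

lemma val_add_ge (x r : Fin (n + 3)) (h : n + 3 ≤ x.val + r.val) :
    (x + r).val = x.val + r.val - (n + 3) := by
  have hx := x.isLt; have hr := r.isLt
  rw [Fin.add_def]
  simp only []
  rw [Nat.mod_eq_sub_mod h, Nat.mod_eq_of_lt (by omega)]

lemma val_add_cases (x r : Fin (n + 3)) :
    ((x + r).val = x.val + r.val ∧ x.val + r.val < n + 3) ∨
    ((x + r).val = x.val + r.val - (n + 3) ∧ n + 3 ≤ x.val + r.val) := by
  rcases lt_or_ge (x.val + r.val) (n + 3) with h | h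
  · exact Or.inl ⟨val_add_lt x r h, h⟩
  · exact Or.inr ⟨val_add_ge x r h, h⟩

lemma val_one' : (1 : Fin (n + 3)).val = 1 := rfl

lemma val_neg_one : (-1 : Fin (n + 3)).val = n + 2 := by
  rw [Fin.neg_def]
  simp [val_one']

lemma val_sub_one (t : Fin (n + 3)) (h : t.val ≠ 0) : (t - 1).val = t.val - 1 := by
  have ht := t.isLt
  rw [Fin.sub_def]
  simp only [val_one']
  rw [Nat.mod_eq_sub_mod (by omega), Nat.mod_eq_of_lt (by omega)]
  omega

lemma val_neg' (t : Fin (n + 3)) (h : t ≠ 0) : (-t).val = n + 3 - t.val := by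
  have ht := t.isLt
  have ht0 : t.val ≠ 0 := fun hh => h (Fin.ext hh)
  rw [Fin.neg_def]
  simp only []
  rw [Nat.mod_eq_of_lt (by omega)]

lemma val_sub_of_le (z t : Fin (n + 3)) (h : t.val ≤ z.val) :
    (z - t).val = z.val - t.val := by
  have hz := z.isLt; have ht := t.isLt
  rw [Fin.sub_def]
  simp only []
  rw [Nat.mod_eq_sub_mod (by omega), Nat.mod_eq_of_lt (by omega)]
  omega

end FinHelp

section Rot
variable {n : ℕ}

def rot (r : Fin (n + 3)) (G : SimpleGraph (Fin (n + 3))) : SimpleGraph (Fin (n + 3)) where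
  Adj a b := G.Adj (a + r) (b + r)
  symm := ⟨fun a b h => h.symm⟩
  loopless := ⟨fun a h => G.loopless.irrefl _ h⟩

lemma rot_adj (r : Fin (n + 3)) (G : SimpleGraph (Fin (n + 3))) (a b : Fin (n + 3)) :
    (rot r G).Adj a b ↔ G.Adj (a + r) (b + r) := Iff.rfl

lemma rot_rot (r t : Fin (n + 3)) (G : SimpleGraph (Fin (n + 3))) :
    rot t (rot r G) = rot (r + t) G := by
  ext a b
  simp only [rot_adj]
  rw [add_assoc, add_assoc, add_comm t r]

lemma rot_edge_ncard (r : Fin (n + 3)) (G : SimpleGraph (Fin (n + 3))) :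
    (rot r G).edgeSet.ncard = G.edgeSet.ncard := by
  have hpre : (rot r G).edgeSet = Sym2.map (· + r) ⁻¹' G.edgeSet := by
    ext e
    induction e using Sym2.ind with
    | _ x y => simp [rot_adj, Sym2.map_pair_eq, SimpleGraph.mem_edgeSet]
  have hsurj : Function.Surjective (Sym2.map (· + r)) := by
    intro e
    induction e using Sym2.ind with
    | _ x y => exact ⟨s(x - r, y - r), by simp [Sym2.map_pair_eq, sub_add_cancel]⟩
  have himg : G.edgeSet = Sym2.map (· + r) '' (rot r G).edgeSet := by
    rw [hpre, Set.image_preimage_eq _ hsurj]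
  rw [himg, Set.ncard_image_of_injective _ (Sym2.map.injective (add_left_injective r))]

end Rot
section RotMop
variable {n : ℕ}
lemma rot_mop (r : Fin (n + 3)) (G : SimpleGraph (Fin (n + 3))) (hG : IsMOP G) :
    IsMOP (rot r G) := by
  obtain ⟨hcyc, hNC, hcnt⟩ := hG
  refine ⟨?_, ?_, ?_⟩
  · intro i
    have : i + 1 + r = (i + r) + 1 := by ring
    rw [rot_adj, this]
    exact hcyc (i + r)
  · intro a b c d hab hcd hlt
    obtain ⟨h1, h2, h3⟩ := hlt
    rw [Fin.lt_def] at h1 h2 h3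
    rw [rot_adj] at hab hcd
    rcases val_add_cases a r with ⟨ea, ha⟩ | ⟨ea, ha⟩ <;>
    rcases val_add_cases c r with ⟨ec, hc⟩ | ⟨ec, hc⟩ <;>
    rcases val_add_cases b r with ⟨eb, hb⟩ | ⟨eb, hb⟩ <;>
    rcases val_add_cases d r with ⟨ed, hd⟩ | ⟨ed, hd⟩ <;>
    first
    | omega
    | exact hNC _ _ _ _ hab hcd
        ⟨Fin.lt_def.2 (by omega), Fin.lt_def.2 (by omega), Fin.lt_def.2 (by omega)⟩
    | exact hNC _ _ _ _ hcd.symm hab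
        ⟨Fin.lt_def.2 (by omega), Fin.lt_def.2 (by omega), Fin.lt_def.2 (by omega)⟩
    | exact hNC _ _ _ _ hab.symm hcd.symm
        ⟨Fin.lt_def.2 (by omega), Fin.lt_def.2 (by omega), Fin.lt_def.2 (by omega)⟩
    | exact hNC _ _ _ _ hcd hab.symm
        ⟨Fin.lt_def.2 (by omega), Fin.lt_def.2 (by omega), Fin.lt_def.2 (by omega)⟩
  · rw [rot_edge_ncard]; exact hcnt
end RotMop
section EB
variable {n : ℕ}

lemma sym2_infsup (e : Sym2 (Fin (n + 3))) : e = s(e.inf, e.sup) := by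
  induction e using Sym2.ind with
  | _ x y =>
    rcases le_total x y with h | h
    · rw [Sym2.inf_mk, Sym2.sup_mk, inf_eq_left.2 h, sup_eq_right.2 h]
    · rw [Sym2.inf_mk, Sym2.sup_mk, inf_eq_right.2 h, sup_eq_left.2 h, Sym2.eq_swap]

def EIn (H : SimpleGraph (Fin (n + 3))) (a b : Fin (n + 3)) : Set (Sym2 (Fin (n + 3))) :=
  {e | e ∈ H.edgeSet ∧ ∀ x ∈ e, a ≤ x ∧ x ≤ b}

lemma EB (H : SimpleGraph (Fin (n + 3)))
    (hNC : ∀ a b c d : Fin (n + 3), H.Adj a b → H.Adj c d → ¬(a < c ∧ c < b ∧ b < d))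
    (a b : Fin (n + 3)) :
    (EIn H a b).ncard ≤ 2 * (b.val - a.val + 1) - 3 := by
  set g : Sym2 (Fin (n + 3)) → ℕ × ℕ := fun e => ((e.inf).val, (e.sup).val) with hg
  have hginj : Function.Injective g := by
    intro e1 e2 h
    simp only [hg, Prod.mk.injEq] at h
    rw [sym2_infsup e1, sym2_infsup e2, Fin.val_injective h.1, Fin.val_injective h.2]
  have hmem : ∀ e : Sym2 (Fin (n + 3)), e.inf ∈ e ∧ e.sup ∈ e := by
    intro e
    constructor <;> (conv => rw [sym2_infsup e]) <;> simp [Sym2.mem_iff] <;>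
      exact le_total _ _
  have hadj : ∀ e ∈ EIn H a b, H.Adj e.inf e.sup ∧ e.inf.val < e.sup.val := by
    intro e he
    have hE := he.1
    have hA : H.Adj e.inf e.sup := by
      rw [← SimpleGraph.mem_edgeSet, ← sym2_infsup e]; exact hE
    refine ⟨hA, ?_⟩
    have hne : e.inf ≠ e.sup := hA.ne
    have hle : e.inf ≤ e.sup := by
      induction e using Sym2.ind with
      | _ x y => rw [Sym2.inf_mk, Sym2.sup_mk]; exact inf_le_sup
    exact lt_of_le_of_ne (Fin.le_def.1 hle) (fun hh => hne (Fin.val_injective hh))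
  have himg : ∀ p ∈ g '' EIn H a b, a.val ≤ p.1 ∧ p.1 < p.2 ∧ p.2 ≤ b.val := by
    rintro p ⟨e, he, rfl⟩
    have h1 := (he.2 _ (hmem e).1).1
    have h2 := (he.2 _ (hmem e).2).2
    exact ⟨Fin.le_def.1 h1, (hadj e he).2, Fin.le_def.1 h2⟩
  have hNC' : ∀ p ∈ g '' EIn H a b, ∀ q ∈ g '' EIn H a b,
      ¬(p.1 < q.1 ∧ q.1 < p.2 ∧ p.2 < q.2) := by
    rintro p ⟨e1, he1, rfl⟩ q ⟨e2, he2, rfl⟩ ⟨h1, h2, h3⟩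
    exact hNC _ _ _ _ (hadj e1 he1).1 (hadj e2 he2).1
      ⟨Fin.lt_def.2 h1, Fin.lt_def.2 h2, Fin.lt_def.2 h3⟩
  calc (EIn H a b).ncard = (g '' EIn H a b).ncard :=
        (Set.ncard_image_of_injective _ hginj).symm
    _ ≤ 2 * (b.val - a.val + 1) - 3 := natBound a.val b.val _ himg hNC'
end EB

section SPsec
variable {n : ℕ}

lemma SP (H : SimpleGraph (Fin (n + 3))) (hH : IsMOP H) (t : Fin (n + 3)) (ht : t ≠ 0)
    (hadj : H.Adj 0 t) :
    (EIn H 0 t).ncard + (EIn (rot t H) 0 (-t)).ncard = 2 * (n + 3) - 3 + 1 := by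
  have ht0 : t.val ≠ 0 := fun h => ht (Fin.ext h)
  have htlt := t.isLt
  set EJ : Set (Sym2 (Fin (n + 3))) := {e | e ∈ H.edgeSet ∧ ∀ x ∈ e, x = 0 ∨ t ≤ x} with hEJ
  have himage : Sym2.map (· + t) '' (EIn (rot t H) 0 (-t)) = EJ := by
    ext e
    constructor
    · rintro ⟨e', he', rfl⟩
      revert he'
      induction e' using Sym2.ind with
      | _ u v =>
        rintro ⟨hE, hcond⟩
        rw [Sym2.map_pair_eq]
        refine ⟨(SimpleGraph.mem_edgeSet _).2 ((rot_adj t H u v).1 ((SimpleGraph.mem_edgeSet _).1 hE)), ?_⟩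
        intro x hx
        rw [Sym2.mem_iff] at hx
        have key : ∀ z : Fin (n + 3), z ≤ -t → z + t = 0 ∨ t ≤ z + t := by
          intro z hz
          have hzv := Fin.le_def.1 hz
          rw [val_neg' t ht] at hzv
          rcases lt_or_ge (z.val + t.val) (n + 3) with h | h
          · right; rw [Fin.le_def, val_add_lt z t h]; omega
          · left
            exact Fin.ext (by rw [val_add_ge z t h, Fin.val_zero]; omega)
        rcases hx with rfl | rfl
        · exact key u (hcond u (by simp [Sym2.mem_iff])).2
        · exact key v (hcond v (by simp [Sym2.mem_iff])).2
    · intro he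
      revert he
      induction e using Sym2.ind with
      | _ x y =>
        rintro ⟨hE, hcond⟩
        refine ⟨s(x - t, y - t), ⟨?_, ?_⟩, ?_⟩
        · rw [SimpleGraph.mem_edgeSet, rot_adj, sub_add_cancel, sub_add_cancel]
          exact (SimpleGraph.mem_edgeSet _).1 hE
        · intro z hz
          rw [Sym2.mem_iff] at hz
          have key : ∀ w : Fin (n + 3), (w = 0 ∨ t ≤ w) → 0 ≤ w - t ∧ w - t ≤ -t := by
            intro w hw
            refine ⟨Fin.zero_le _, ?_⟩
            rcases hw with rfl | hw
            · rw [zero_sub]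
            · rw [Fin.le_def, val_sub_of_le w t (Fin.le_def.1 hw), val_neg' t ht]
              have := w.isLt; omega
          rcases hz with rfl | rfl
          · exact key x (hcond x (by simp [Sym2.mem_iff]))
          · exact key y (hcond y (by simp [Sym2.mem_iff]))
        · rw [Sym2.map_pair_eq, sub_add_cancel, sub_add_cancel]
  have hJcard : (EIn (rot t H) 0 (-t)).ncard = EJ.ncard := by
    rw [← himage, Set.ncard_image_of_injective _ (Sym2.map.injective (add_left_injective t))]
  have hunion : H.edgeSet = EIn H 0 t ∪ EJ := by
    apply Set.Subset.antisymm
    · intro e he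
      by_contra hcon
      rw [Set.mem_union] at hcon
      push_neg at hcon
      obtain ⟨hnI, hnJ⟩ := hcon
      have hI' : ¬ ∀ x ∈ e, (0 : Fin (n + 3)) ≤ x ∧ x ≤ t := fun h => hnI ⟨he, h⟩
      push_neg at hI'
      obtain ⟨u, hu, hu2⟩ := hI'
      have hut : t < u := hu2 (Fin.zero_le u)
      have hJ' : ¬ ∀ x ∈ e, x = 0 ∨ t ≤ x := fun h => hnJ ⟨he, h⟩
      push_neg at hJ'
      obtain ⟨z, hz, hz2⟩ := hJ'
      have hzt : z < t := hz2.2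
      have hne : z ≠ u := (hzt.trans hut).ne
      have hee : e = s(z, u) := (Sym2.mem_and_mem_iff hne).1 ⟨hz, hu⟩
      rw [hee] at he
      exact hH.2.1 0 t z u hadj ((SimpleGraph.mem_edgeSet _).1 he)
        ⟨Fin.pos_of_ne_zero hz2.1, hzt, hut⟩
    · rintro e (he | he) <;> exact he.1
  have hinter : EIn H 0 t ∩ EJ = {s(0, t)} := by
    ext e
    rw [Set.mem_singleton_iff]
    constructor
    · intro he
      revert he
      induction e using Sym2.ind with
      | _ x y =>
        rintro ⟨⟨heE, h1⟩, _, h2⟩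
        have hx := h1 x (by simp)
        have hy := h1 y (by simp)
        have hx2 := h2 x (by simp)
        have hy2 := h2 y (by simp)
        have hxy : x ≠ y := ((SimpleGraph.mem_edgeSet _).1 heE).ne
        have hc : ∀ w : Fin (n + 3), (0 ≤ w ∧ w ≤ t) → (w = 0 ∨ t ≤ w) → w = 0 ∨ w = t :=
          fun w hw1 hw2 => hw2.imp id (fun h => le_antisymm hw1.2 h)
        rcases hc x hx hx2 with rfl | rfl
        · rcases hc y hy hy2 with rfl | rfl
          · exact absurd rfl hxy
          · rfl
        · rcases hc y hy hy2 with rfl | rfl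
          · exact Sym2.eq_swap
          · exact absurd rfl hxy
    · rintro rfl
      have hc1 : ∀ x ∈ s((0 : Fin (n + 3)), t), 0 ≤ x ∧ x ≤ t := by
        intro x hx
        rcases Sym2.mem_iff.1 hx with rfl | rfl
        · exact ⟨le_refl _, Fin.zero_le _⟩
        · exact ⟨Fin.zero_le _, le_refl _⟩
      have hc2 : ∀ x ∈ s((0 : Fin (n + 3)), t), x = 0 ∨ t ≤ x := by
        intro x hx
        rcases Sym2.mem_iff.1 hx with rfl | rfl
        · exact Or.inl rfl
        · exact Or.inr (le_refl _)
      exact ⟨⟨(SimpleGraph.mem_edgeSet _).2 hadj, hc1⟩, (SimpleGraph.mem_edgeSet _).2 hadj, hc2⟩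
  have hcnt := Set.ncard_union_add_ncard_inter (EIn H 0 t) EJ (Set.toFinite _) (Set.toFinite _)
  rw [← hunion, hinter, Set.ncard_singleton, hH.2.2] at hcnt
  rw [hJcard]
  omega

end SPsec

section L0sec
variable {n : ℕ}

lemma valne {a b : Fin (n + 3)} (h : a.val ≠ b.val) : a ≠ b :=
  fun hh => h (congrArg Fin.val hh)

lemma L0 (H : SimpleGraph (Fin (n + 3)))
    (hcyc : ∀ i : Fin (n + 3), H.Adj i (i + 1))
    (hNC : ∀ a b c d : Fin (n + 3), H.Adj a b → H.Adj c d → ¬(a < c ∧ c < b ∧ b < d))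
    (t : Fin (n + 3)) (ht3 : 3 ≤ t.val)
    (hadj : H.Adj 0 t)
    (hcount : (EIn H 0 t).ncard = 2 * (t.val + 1) - 3)
    (hN0 : ∀ y, H.Adj 0 y → y ≤ t → y = 1 ∨ y = t)
    (hNt : ∀ y, H.Adj t y → y ≤ t → y = t - 1 ∨ y = 0) : False := by
  have htlt := t.isLt
  have ht0 : t.val ≠ 0 := by omega
  have hval1 : (1 : Fin (n + 3)).val = 1 := rfl
  have hvalt1 : (t - 1).val = t.val - 1 := val_sub_one t ht0
  set Eint := EIn H 1 (t - 1) with hEint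
  set T : Set (Sym2 (Fin (n + 3))) := {s(0, 1), s(0, t), s(t - 1, t)} with hT
  have hsub_add : t - 1 + 1 = t := by ring
  have hsplit : EIn H 0 t = Eint ∪ T := by
    ext e
    constructor
    · intro he
      revert he
      induction e using Sym2.ind with
      | _ x y =>
        rintro ⟨hE, hcond⟩
        have hAdj : H.Adj x y := (SimpleGraph.mem_edgeSet _).1 hE
        have hx := hcond x (by simp)
        have hy := hcond y (by simp)
        by_cases hx0 : x = 0
        · subst hx0
          rcases hN0 y hAdj hy.2 with rfl | rfl
          · exact Or.inr (by simp [hT])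
          · exact Or.inr (by simp [hT])
        by_cases hy0 : y = 0
        · subst hy0
          rcases hN0 x hAdj.symm hx.2 with rfl | rfl
          · exact Or.inr (by rw [Sym2.eq_swap]; simp [hT])
          · exact Or.inr (by rw [Sym2.eq_swap]; simp [hT])
        by_cases hxt : x = t
        · subst hxt
          rcases hNt y hAdj hy.2 with rfl | rfl
          · exact Or.inr (by rw [Sym2.eq_swap]; simp [hT])
          · exact absurd rfl hy0
        by_cases hyt : y = t
        · subst hyt
          rcases hNt x hAdj.symm hx.2 with rfl | rfl
          · exact Or.inr (by simp [hT])
          · exact absurd rfl hx0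
        · left
          refine ⟨hE, ?_⟩
          intro z hz
          have hb : ∀ w : Fin (n + 3), w ≠ 0 → w ≠ t → w ≤ t → 1 ≤ w ∧ w ≤ t - 1 := by
            intro w hw0 hwt hwle
            have h1 : w.val ≠ 0 := fun h => hw0 (Fin.ext h)
            have h2 : w.val ≠ t.val := fun h => hwt (Fin.ext h)
            have h3 : w.val ≤ t.val := Fin.le_def.1 hwle
            constructor <;> rw [Fin.le_def] <;> omega
          rcases Sym2.mem_iff.1 hz with rfl | rfl
          · exact hb z hx0 hxt hx.2
          · exact hb z hy0 hyt hy.2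
    · intro he
      rcases he with he | he
      · refine ⟨he.1, ?_⟩
        intro z hz
        have := he.2 z hz
        refine ⟨Fin.zero_le _, ?_⟩
        have h1 := Fin.le_def.1 this.2
        rw [Fin.le_def]; omega
      · have hcond0t : ∀ z ∈ s((0 : Fin (n + 3)), t), 0 ≤ z ∧ z ≤ t := by
          intro z hz
          rcases Sym2.mem_iff.1 hz with rfl | rfl
          · exact ⟨le_refl _, Fin.zero_le _⟩
          · exact ⟨Fin.zero_le _, le_refl _⟩
        simp only [hT, Set.mem_insert_iff, Set.mem_singleton_iff] at he
        rcases he with rfl | rfl | rfl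
        · refine ⟨(SimpleGraph.mem_edgeSet _).2 (by simpa using hcyc 0), ?_⟩
          intro z hz
          rcases Sym2.mem_iff.1 hz with rfl | rfl
          · exact ⟨le_refl _, Fin.zero_le _⟩
          · exact ⟨Fin.zero_le _, by rw [Fin.le_def]; omega⟩
        · exact ⟨(SimpleGraph.mem_edgeSet _).2 hadj, hcond0t⟩
        · refine ⟨(SimpleGraph.mem_edgeSet _).2 (by simpa [hsub_add] using hcyc (t - 1)), ?_⟩
          intro z hz
          rcases Sym2.mem_iff.1 hz with rfl | rfl
          · exact ⟨Fin.zero_le _, by rw [Fin.le_def]; omega⟩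
          · exact ⟨Fin.zero_le _, le_refl _⟩
  have hdisj : Disjoint Eint T := by
    rw [Set.disjoint_right]
    intro e heT heI
    have hcond := heI.2
    simp only [hT, Set.mem_insert_iff, Set.mem_singleton_iff] at heT
    rcases heT with rfl | rfl | rfl
    · have := (hcond 0 (by simp)).1
      rw [Fin.le_def, hval1, Fin.val_zero] at this; omega
    · have := (hcond 0 (by simp)).1
      rw [Fin.le_def, hval1, Fin.val_zero] at this; omega
    · have := (hcond t (by simp)).2
      rw [Fin.le_def, hvalt1] at this; omega
  have hTcard : T.ncard = 3 := by
    refine Set.ncard_eq_three.2 ⟨_, _, _, ?_, ?_, ?_, rfl⟩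
    · intro h
      rw [Sym2.eq_iff] at h
      rcases h with ⟨_, h⟩ | ⟨h, _⟩
      · exact valne (by omega) h
      · exact valne (by rw [Fin.val_zero]; omega) h
    · intro h
      rw [Sym2.eq_iff] at h
      rcases h with ⟨h, _⟩ | ⟨h, _⟩
      · exact valne (by rw [Fin.val_zero, hvalt1]; omega) h
      · exact valne (by rw [Fin.val_zero]; omega) h
    · intro h
      rw [Sym2.eq_iff] at h
      rcases h with ⟨h, _⟩ | ⟨h, _⟩
      · exact valne (by rw [Fin.val_zero, hvalt1]; omega) h
      · exact valne (by rw [Fin.val_zero]; omega) h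
  have hcnt2 : (EIn H 0 t).ncard = Eint.ncard + 3 := by
    rw [hsplit, Set.ncard_union_eq hdisj (Set.toFinite _) (Set.toFinite _), hTcard]
  have hEB := EB H hNC 1 (t - 1)
  rw [hval1, hvalt1, ← hEint] at hEB
  rw [hcount] at hcnt2
  omega

end L0sec

section NoChordSec
variable {n : ℕ}

lemma nbhd_eq {G : SimpleGraph (Fin (n + 3))} (hG : IsMOP G) {v w : Fin (n + 3)}
    (hv : (G.neighborSet v).ncard = 3) (hadj : G.Adj v w)
    (hw1 : w ≠ v + 1) (hw2 : w ≠ v - 1) :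
    G.neighborSet v = {v - 1, v + 1, w} := by
  have hsub : ({v - 1, v + 1, w} : Set (Fin (n + 3))) ⊆ G.neighborSet v := by
    intro x hx
    simp only [Set.mem_insert_iff, Set.mem_singleton_iff] at hx
    rcases hx with rfl | rfl | rfl
    · have := hG.1 (v - 1)
      rw [sub_add_cancel] at this
      exact this.symm
    · exact hG.1 v
    · exact hadj
  have hd1 : v - 1 ≠ v + 1 := by
    intro h
    have h2 : (-1 : Fin (n + 3)) = 1 := by
      have hh : v + -1 = v + 1 := by rw [← sub_eq_add_neg]; exact h
      exact add_left_cancel hh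
    have := congrArg Fin.val h2
    rw [val_neg_one] at this
    have : n + 2 = 1 := by rw [this]; rfl
    omega
  have h3 : ({v - 1, v + 1, w} : Set (Fin (n + 3))).ncard = 3 :=
    Set.ncard_eq_three.2 ⟨v - 1, v + 1, w, hd1, Ne.symm hw2, Ne.symm hw1, rfl⟩
  exact (Set.eq_of_subset_of_ncard_le hsub (by rw [hv, h3]) (Set.toFinite _)).symm

lemma noChord (hn : 2 ≤ n) {G : SimpleGraph (Fin (n + 3))} (hG : IsMOP G)
    {v w : Fin (n + 3)} (hv : (G.neighborSet v).ncard = 3) (hw : (G.neighborSet w).ncard = 3)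
    (hadj : G.Adj v w) : w = v + 1 ∨ v = w + 1 := by
  by_contra hcon
  push_neg at hcon
  obtain ⟨h1, h2⟩ := hcon
  have hval1 : (1 : Fin (n + 3)).val = 1 := rfl
  have h2' : w ≠ v - 1 := fun h => h2 (by rw [h, sub_add_cancel])
  have h1' : v ≠ w - 1 := fun h => h1 (by rw [h, sub_add_cancel])
  have hNv : G.neighborSet v = {v - 1, v + 1, w} := nbhd_eq hG hv hadj h1 h2'
  have hNw : G.neighborSet w = {w - 1, w + 1, v} := nbhd_eq hG hw hadj.symm h2 h1'
  set t := w - v with htdef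
  have htv : t + v = w := sub_add_cancel w v
  have ht0 : t ≠ 0 := sub_ne_zero.2 hadj.ne.symm
  have ht1 : t ≠ 1 := by
    intro h
    apply h1
    rw [← htv, h]
    exact add_comm 1 v
  have htm1 : t ≠ -1 := by
    intro h
    apply h2
    rw [← htv, h]; ring
  have htval : 2 ≤ t.val ∧ t.val ≤ n + 1 := by
    have hlt := t.isLt
    have v0 : t.val ≠ 0 := fun h => ht0 (Fin.ext h)
    have v1 : t.val ≠ 1 := fun h => ht1 (Fin.ext h)
    have vm : t.val ≠ n + 2 := fun h => htm1 (Fin.ext (by rw [h, val_neg_one]))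
    omega
  set H1 := rot v G with hH1
  have hmop1 : IsMOP H1 := rot_mop v G hG
  have hadj1 : H1.Adj 0 t := by
    have : G.Adj (0 + v) (t + v) := by rw [zero_add, htv]; exact hadj
    exact this
  have hsum := SP H1 hmop1 t ht0 hadj1
  have hEB1 := EB H1 hmop1.2.1 0 t
  have hEB2 := EB (rot t H1) (rot_mop t H1 hmop1).2.1 0 (-t)
  rw [Fin.val_zero] at hEB1 hEB2
  have hnegt : (-t).val = n + 3 - t.val := val_neg' t ht0
  rw [hnegt] at hEB2
  have hc1 : (EIn H1 0 t).ncard = 2 * (t.val + 1) - 3 := by omega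
  have hc2 : (EIn (rot t H1) 0 (-t)).ncard = 2 * ((n + 3 - t.val) + 1) - 3 := by omega
  have hmemNv : ∀ y : Fin (n + 3), G.Adj v y → (y = v - 1 ∨ y = v + 1 ∨ y = w) := by
    intro y hy
    have hmem : y ∈ G.neighborSet v := hy
    rw [hNv] at hmem
    simpa using hmem
  have hmemNw : ∀ y : Fin (n + 3), G.Adj w y → (y = w - 1 ∨ y = w + 1 ∨ y = v) := by
    intro y hy
    have hmem : y ∈ G.neighborSet w := hy
    rw [hNw] at hmem
    simpa using hmem
  rcases lt_or_ge t.val 3 with ht2 | ht3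
  · -- t.val = 2 : use the other side
    have ht'0 : (-t) ≠ 0 := neg_ne_zero.2 ht0
    have ht'val : (-t).val = n + 1 := by rw [hnegt]; omega
    refine L0 (rot t H1) (rot_mop t H1 hmop1).1 (rot_mop t H1 hmop1).2.1 (-t)
      (by rw [ht'val]; omega) ?_ (by rw [ht'val]; rw [show n + 3 - t.val = n + 1 by omega] at hc2; exact hc2) ?_ ?_
    · -- adjacency 0 (-t)
      have : H1.Adj (0 + t) (-t + t) := by rw [zero_add, neg_add_cancel]; exact hadj1.symm
      exact this
    · -- neighbors of 0 in rot t H1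
      intro y hy hyle
      have hy' : G.Adj ((0 + t) + v) ((y + t) + v) := hy
      rw [zero_add, htv, add_assoc, htv] at hy'
      rcases hmemNw _ hy' with h | h | h
      · exfalso
        have hyy : y = -1 := by
          have := eq_sub_of_add_eq h
          rw [this]; ring
        rw [hyy] at hyle
        have := Fin.le_def.1 hyle
        rw [val_neg_one, ht'val] at this
        omega
      · left
        have := eq_sub_of_add_eq h
        rw [this]; ring
      · right
        have := eq_sub_of_add_eq h
        rw [this, htdef]; ring
    · -- neighbors of -t in rot t H1
      intro y hy hyle
      have hy' : G.Adj ((-t + t) + v) ((y + t) + v) := hy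
      rw [neg_add_cancel, zero_add, add_assoc, htv] at hy'
      rcases hmemNv _ hy' with h | h | h
      · left
        have := eq_sub_of_add_eq h
        rw [this, htdef]; ring
      · exfalso
        have hyy : y = -t + 1 := by
          have := eq_sub_of_add_eq h
          rw [this, htdef]; ring
        rw [hyy] at hyle
        have hle := Fin.le_def.1 hyle
        rw [val_add_lt (-t) 1 (by rw [ht'val, hval1]; omega), hval1, ht'val] at hle
        omega
      · right
        have := eq_sub_of_add_eq h
        rw [this]; ring
  · -- t.val ≥ 3 : use side [0, t]
    refine L0 H1 hmop1.1 hmop1.2.1 t ht3 hadj1 hc1 ?_ ?_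
    · intro y hy hyle
      have hy' : G.Adj (0 + v) (y + v) := hy
      rw [zero_add] at hy'
      rcases hmemNv _ hy' with h | h | h
      · exfalso
        have hyy : y = -1 := by
          have := eq_sub_of_add_eq h
          rw [this]; ring
        rw [hyy] at hyle
        have := Fin.le_def.1 hyle
        rw [val_neg_one] at this
        omega
      · left
        have := eq_sub_of_add_eq h
        rw [this]; ring
      · right
        have := eq_sub_of_add_eq h
        rw [this, htdef]
    · intro y hy hyle
      have hy' : G.Adj (t + v) (y + v) := hy
      rw [htv] at hy'
      rcases hmemNw _ hy' with h | h | h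
      · left
        have := eq_sub_of_add_eq h
        rw [this, htdef]; ring
      · exfalso
        have hyy : y = t + 1 := by
          have := eq_sub_of_add_eq h
          rw [this, htdef]; ring
        rw [hyy] at hyle
        have hle := Fin.le_def.1 hyle
        rw [val_add_lt t 1 (by rw [hval1]; omega), hval1] at hle
        omega
      · right
        have := eq_sub_of_add_eq h
        rw [this]; ring
end NoChordSec

section FinalSec
variable {n : ℕ}

lemma deg_le {G : SimpleGraph (Fin (n + 3))} (v : Fin (n + 3)) :
    (G.neighborSet v).ncard ≤ n + 2 := by
  have hsub : G.neighborSet v ⊆ Set.univ \ {v} := by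
    intro y hy
    exact ⟨trivial, fun h => (G.ne_of_adj hy) (Set.mem_singleton_iff.1 h).symm⟩
  have h2 : (Set.univ \ {v} : Set (Fin (n + 3))).ncard = n + 2 := by
    rw [Set.ncard_diff (Set.subset_univ _), Set.ncard_univ, Set.ncard_singleton,
      Nat.card_eq_fintype_card, Fintype.card_fin]
    omega
  calc (G.neighborSet v).ncard ≤ (Set.univ \ {v} : Set (Fin (n + 3))).ncard :=
        Set.ncard_le_ncard hsub (Set.toFinite _)
    _ = n + 2 := h2

lemma exists_deg_ne3 (hn : 2 ≤ n) {G : SimpleGraph (Fin (n + 3))} (hG : IsMOP G) :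
    ∃ u : Fin (n + 3), (G.neighborSet u).ncard ≠ 3 := by
  by_contra hall
  push_neg at hall
  classical
  have hdeg : ∀ v : Fin (n + 3), G.degree v = 3 := by
    intro v
    show (G.neighborFinset v).card = 3
    rw [SimpleGraph.neighborFinset_def, ← Set.ncard_eq_toFinset_card']
    exact hall v
  have hsum := SimpleGraph.sum_degrees_eq_twice_card_edges G
  have hL : ∑ v : Fin (n + 3), G.degree v = 3 * (n + 3) := by
    rw [Finset.sum_congr rfl (fun v _ => hdeg v), Finset.sum_const, Finset.card_univ,
      Fintype.card_fin, smul_eq_mul]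
    ring
  have hE : G.edgeFinset.card = 2 * (n + 3) - 3 := by
    rw [← Set.ncard_coe_finset, SimpleGraph.coe_edgeFinset]; exact hG.2.2
  rw [hL, hE] at hsum
  have hn3 : n = 3 := by omega
  -- vertex 0 has a chord neighbor
  set s : Set (Fin (n + 3)) := {(0 : Fin (n + 3)) - 1, 0 + 1} with hs
  have hssub : s ⊆ G.neighborSet 0 := by
    intro x hx
    simp only [hs, Set.mem_insert_iff, Set.mem_singleton_iff] at hx
    rcases hx with rfl | rfl
    · have := hG.1 ((0 : Fin (n + 3)) - 1)
      rw [sub_add_cancel] at this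
      exact this.symm
    · exact hG.1 0
  have hd1 : (0 : Fin (n + 3)) - 1 ≠ 0 + 1 := by
    intro h
    have h2 : (-1 : Fin (n + 3)) = 1 := by
      have hh : (0 : Fin (n + 3)) + -1 = 0 + 1 := by rw [← sub_eq_add_neg]; exact h
      exact add_left_cancel hh
    have h3 := congrArg Fin.val h2
    rw [val_neg_one] at h3
    have : n + 2 = 1 := by rw [h3]; rfl
    omega
  have hs2 : s.ncard = 2 := Set.ncard_pair hd1
  have hdiff : (G.neighborSet 0 \ s).ncard = 1 := by
    rw [Set.ncard_diff hssub (Set.toFinite _), hall 0, hs2]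
  obtain ⟨u, hu⟩ := Set.ncard_eq_one.1 hdiff
  have humem : u ∈ G.neighborSet 0 \ s := by rw [hu]; exact rfl
  have hadj0u : G.Adj 0 u := humem.1
  have hus : u ∉ s := humem.2
  rcases noChord hn hG (hall 0) (hall u) hadj0u with h | h
  · exact hus (by rw [hs, h]; right; rfl)
  · have : u = (0 : Fin (n + 3)) - 1 := eq_sub_of_add_eq h.symm
    exact hus (by rw [hs, this]; left; rfl)

end FinalSec
end MOPProof




/-- In a maximal outerplanar graph on at least 3 vertices, the vertices of degree 3
induce a bipartite (2-colorable) graph. -/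
theorem mop_degree_three_bipartite {n : ℕ} (G : SimpleGraph (Fin (n + 3)))
    (hG : IsMOP G) :
    (G.induce {v | (G.neighborSet v).ncard = 3}).Colorable 2 := by
  rcases lt_or_ge n 2 with hn | hn
  · interval_cases n
    · -- n = 0 : no vertex has degree 3
      refine ⟨SimpleGraph.Coloring.mk (fun _ => 0) ?_⟩
      rintro ⟨x, hx⟩ ⟨y, hy⟩ hadj
      exfalso
      have hle := deg_le (G := G) x
      have hx3 : (G.neighborSet x).ncard = 3 := hx
      omega
    · -- n = 1 : at most two (opposite) vertices of degree 3
      have hfull : ∀ v : Fin (1 + 3), (G.neighborSet v).ncard = 3 →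
          ∀ x, x ≠ v → G.Adj v x := by
        intro v hv3 x hx
        have hsub : G.neighborSet v ⊆ Set.univ \ {v} := by
          intro y hy
          exact ⟨trivial, fun h => (G.ne_of_adj hy) (Set.mem_singleton_iff.1 h).symm⟩
        have hcard : (Set.univ \ {v} : Set (Fin (1 + 3))).ncard = 3 := by
          rw [Set.ncard_diff (Set.subset_univ _), Set.ncard_univ, Set.ncard_singleton,
            Nat.card_eq_fintype_card, Fintype.card_fin]
        have heq : G.neighborSet v = Set.univ \ {v} :=
          Set.eq_of_subset_of_ncard_le hsub (by rw [hv3, hcard]) (Set.toFinite _)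
        have hmem : x ∈ G.neighborSet v := by
          rw [heq]
          exact ⟨trivial, fun h => hx (Set.mem_singleton_iff.1 h)⟩
        exact hmem
      have hkey : ∀ v w : Fin (1 + 3), (G.neighborSet v).ncard = 3 →
          (G.neighborSet w).ncard = 3 → w ≠ v → w = v + 2 := by
        intro v w hv hw hne
        by_contra hne2
        fin_cases v <;> fin_cases w <;>
          first
          | exact hne rfl
          | exact hne2 (by decide)
          | exact hG.2.1 0 2 1 3
              (by first
                | exact hfull _ hv 2 (by decide)
                | exact (hfull _ hv 0 (by decide)).symm
                | exact hfull _ hw 2 (by decide)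
                | exact (hfull _ hw 0 (by decide)).symm)
              (by first
                | exact hfull _ hv 3 (by decide)
                | exact (hfull _ hv 1 (by decide)).symm
                | exact hfull _ hw 3 (by decide)
                | exact (hfull _ hw 1 (by decide)).symm)
              (by decide)
      by_cases hS : ∃ v : Fin (1 + 3), (G.neighborSet v).ncard = 3
      · obtain ⟨v, hv⟩ := hS
        refine ⟨SimpleGraph.Coloring.mk (fun x => if x.1 = v then 0 else 1) ?_⟩
        rintro ⟨x, hx⟩ ⟨y, hy⟩ hadj hcol
        have hxy : G.Adj x y := hadj
        have hnexy : x ≠ y := hxy.ne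
        have hx3 : (G.neighborSet x).ncard = 3 := hx
        have hy3 : (G.neighborSet y).ncard = 3 := hy
        by_cases hxv : x = v
        · by_cases hyv : y = v
          · exact hnexy (hxv.trans hyv.symm)
          · simp [hxv, hyv] at hcol
        · by_cases hyv : y = v
          · simp [hxv, hyv] at hcol
          · exact hnexy ((hkey v x hv hx3 hxv).trans (hkey v y hv hy3 hyv).symm)
      · push_neg at hS
        refine ⟨SimpleGraph.Coloring.mk (fun _ => 0) ?_⟩
        rintro ⟨x, hx⟩ _ _
        exact absurd hx (hS x)
  · -- n ≥ 2 : parity coloring from a vertex of degree ≠ 3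
    obtain ⟨u, hu⟩ := exists_deg_ne3 hn hG
    have hval1 : (1 : Fin (n + 3)).val = 1 := rfl
    refine ⟨SimpleGraph.Coloring.mk
      (fun x => (⟨(x.1 - u).val % 2, by omega⟩ : Fin 2)) ?_⟩
    rintro ⟨x, hx⟩ ⟨y, hy⟩ hadj hcol
    have hxy : G.Adj x y := hadj
    have hx3 : (G.neighborSet x).ncard = 3 := hx
    have hy3 : (G.neighborSet y).ncard = 3 := hy
    have hxu : x ≠ u := fun h => hu (h ▸ hx3)
    have hyu : y ≠ u := fun h => hu (h ▸ hy3)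
    have hcol' : (x - u).val % 2 = (y - u).val % 2 := congrArg Fin.val hcol
    have key : ∀ p q : Fin (n + 3), p ≠ u → q ≠ u → q = p + 1 →
        (p - u).val % 2 = (q - u).val % 2 → False := by
      intro p q hpu hqu hq hc
      have hstep : q - u = (p - u) + 1 := by rw [hq]; open Fin.CommRing in ring
      have hpn : (p - u) ≠ 0 := sub_ne_zero.2 hpu
      have hpv : (p - u).val ≠ 0 := fun h => hpn (Fin.ext h)
      have hplt := (p - u).isLt
      by_cases htop : (p - u).val = n + 2
      · have h0 : (q - u).val = 0 := by
          rw [hstep, val_add_ge (p - u) 1 (by rw [htop, hval1]), htop, hval1]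
          omega
        exact hqu (sub_eq_zero.1 (Fin.ext h0))
      · have hq1 : (q - u).val = (p - u).val + 1 := by
          rw [hstep, val_add_lt (p - u) 1 (by rw [hval1]; omega), hval1]
        omega
    rcases noChord hn hG hx3 hy3 hxy with h | h
    · exact key x y hxu hyu h hcol'
    · exact key y x hyu hxu h hcol'.symm
end

section
/- If G is a graph on n ≥ 5 vertices, then 3 ≤ fd(G) + fd(Ḡ) ≤ 2n − 4, and if n ≥ 4 then 2 ≤ fd(G)·fd(Ḡ) ≤ (n−2)². -/
section Aux
variable {V : Type*} [Fintype V] (G : SimpleGraph V)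

lemma fdSet_univ : IsFDSet G Set.univ :=
  ⟨1, le_refl 1, fun v hv => absurd (Set.mem_univ v) hv,
    fun v hv => absurd (Set.mem_univ v) hv⟩

lemma fd_set_nonempty : {m | ∃ D : Set V, IsFDSet G D ∧ D.ncard = m}.Nonempty :=
  ⟨(Set.univ : Set V).ncard, Set.univ, fdSet_univ G, rfl⟩

lemma fd_le_card : fd G ≤ Fintype.card V := by
  have h : Fintype.card V ∈ {m | ∃ D : Set V, IsFDSet G D ∧ D.ncard = m} :=
    ⟨Set.univ, fdSet_univ G, by simp [Set.ncard_univ, Nat.card_eq_fintype_card]⟩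
  exact Nat.sInf_le h

lemma one_le_fd [Nonempty V] : 1 ≤ fd G := by
  rw [Nat.one_le_iff_ne_zero]
  intro h0
  rcases (Nat.sInf_eq_zero.mp h0) with h | h
  · obtain ⟨D, ⟨k, _, hdom, _⟩, hcard⟩ := h
    have hD : D = ∅ := (Set.ncard_eq_zero (Set.toFinite D)).mp hcard
    obtain ⟨v⟩ := ‹Nonempty V›
    obtain ⟨u, hu, _⟩ := hdom v (by simp [hD])
    simp [hD] at hu
  · exact absurd h (Set.nonempty_iff_ne_empty.mp (fd_set_nonempty G))

lemma fd_eq_one_of_universal (u : V) (h : ∀ v, v ≠ u → G.Adj u v) [Nonempty V] :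
    fd G = 1 := by
  have h1 : fd G ≤ 1 := by
    apply Nat.sInf_le
    refine ⟨{u}, ⟨1, le_refl 1, fun v hv => ⟨u, rfl, h v (by simpa using hv)⟩,
      fun v hv => ?_⟩, Set.ncard_singleton u⟩
    have : G.neighborSet v ∩ {u} = {u} := by
      apply Set.inter_eq_self_of_subset_right
      simpa using (h v (by simpa using hv)).symm
    rw [this, Set.ncard_singleton]
  exact le_antisymm h1 (one_le_fd G)

lemma exists_universal_of_fd_eq_one (h : fd G = 1) :
    ∃ u : V, ∀ v, v ≠ u → G.Adj u v := by
  have hmem := Nat.sInf_mem (fd_set_nonempty G)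
  rw [show sInf {m | ∃ D : Set V, IsFDSet G D ∧ D.ncard = m} = fd G from rfl, h] at hmem
  obtain ⟨D, ⟨k, _, hdom, _⟩, hcard⟩ := hmem
  obtain ⟨u, rfl⟩ := Set.ncard_eq_one.mp hcard
  refine ⟨u, fun v hv => ?_⟩
  obtain ⟨w, hw, hadj⟩ := hdom v (by simpa using hv)
  rw [Set.mem_singleton_iff] at hw
  exact hw ▸ hadj

lemma not_both_fd_one (h2 : 2 ≤ Fintype.card V) : ¬(fd G = 1 ∧ fd Gᶜ = 1) := by
  rintro ⟨hG, hGc⟩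
  obtain ⟨u, hu⟩ := exists_universal_of_fd_eq_one G hG
  obtain ⟨w, hw⟩ := exists_universal_of_fd_eq_one Gᶜ hGc
  by_cases huw : u = w
  · subst huw
    obtain ⟨v, hv⟩ := Fintype.exists_ne_of_one_lt_card (by omega) u
    exact (hw v hv).2 (hu v hv)
  · exact (hw u huw).2 ((hu w (Ne.symm huw)).symm)

end Aux

section Aux2
variable {V : Type*} [Fintype V] (G : SimpleGraph V)

omit [Fintype V] in
lemma nbr_inter_compl (x y : V) :
    G.neighborSet x ∩ ({x, y} : Set V)ᶜ = G.neighborSet x \ {y} := by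
  ext u
  simp only [Set.mem_inter_iff, Set.mem_compl_iff, Set.mem_insert_iff,
    Set.mem_singleton_iff, Set.mem_diff, SimpleGraph.mem_neighborSet]
  constructor
  · rintro ⟨h1, h2⟩; exact ⟨h1, fun h => h2 (Or.inr h)⟩
  · rintro ⟨h1, h2⟩; exact ⟨h1, by rintro (rfl | rfl); exact G.irrefl h1; exact h2 rfl⟩

lemma pair_fd (x y : V) (hxy : x ≠ y)
    (hd : (G.neighborSet x).ncard = (G.neighborSet y).ncard)
    (h1 : 1 ≤ (G.neighborSet x).ncard)
    (h2 : G.Adj x y → 2 ≤ (G.neighborSet x).ncard) :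
    fd G ≤ Fintype.card V - 2 := by
  classical
  set D : Set V := ({x, y} : Set V)ᶜ with hD
  set k : ℕ := (G.neighborSet x ∩ D).ncard with hk
  have hxcount : (G.neighborSet x ∩ D).ncard =
      (G.neighborSet x).ncard - (if G.Adj x y then 1 else 0) := by
    rw [hD, nbr_inter_compl]
    by_cases h : G.Adj x y
    · rw [if_pos h,
        Set.ncard_diff_singleton_of_mem (show y ∈ G.neighborSet x from h)]
    · rw [if_neg h, Set.diff_singleton_eq_self (show y ∉ G.neighborSet x from h), Nat.sub_zero]
  have hycount : (G.neighborSet y ∩ D).ncard =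
      (G.neighborSet y).ncard - (if G.Adj x y then 1 else 0) := by
    have heq : G.neighborSet y ∩ D = G.neighborSet y \ {x} := by
      rw [hD, Set.pair_comm x y]
      exact nbr_inter_compl G y x
    rw [heq]
    by_cases h : G.Adj x y
    · rw [if_pos h,
        Set.ncard_diff_singleton_of_mem (show x ∈ G.neighborSet y from h.symm)]
    · have hh : x ∉ G.neighborSet y := fun hc => h (G.adj_symm hc)
      rw [if_neg h, Set.diff_singleton_eq_self hh, Nat.sub_zero]
  have hk1 : 1 ≤ k := by
    rw [hk, hxcount]
    by_cases h : G.Adj x y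
    · have := h2 h; rw [if_pos h]; omega
    · rw [if_neg h]; omega
  have hsame : ∀ v ∉ D, (G.neighborSet v ∩ D).ncard = k := by
    intro v hv
    have hv' : v = x ∨ v = y := by
      simp only [hD, Set.mem_compl_iff, not_not] at hv
      exact hv
    rcases hv' with rfl | rfl
    · rfl
    · rw [hycount, hk, hxcount, hd]
  have hdom : ∀ v ∉ D, ∃ u ∈ D, G.Adj u v := by
    intro v hv
    have hne : (G.neighborSet v ∩ D).Nonempty := by
      rw [← Set.ncard_pos (Set.toFinite _), hsame v hv]; omega
    obtain ⟨u, hu1, hu2⟩ := hne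
    exact ⟨u, hu2, (show G.Adj v u from hu1).symm⟩
  have hcard : D.ncard = Fintype.card V - 2 := by
    have hcc := Set.ncard_add_ncard_compl ({x, y} : Set V) (Set.toFinite _) (Set.toFinite _)
    rw [Set.ncard_pair hxy, Nat.card_eq_fintype_card] at hcc
    rw [hD]
    omega
  exact Nat.sInf_le ⟨D, ⟨k, hk1, hdom, hsame⟩, hcard⟩

lemma exists_good_pair (e₁ e₂ : Sym2 V) (he₁ : e₁ ∈ G.edgeSet) (he₂ : e₂ ∈ G.edgeSet)
    (hne : e₁ ≠ e₂) :
    ∃ x y : V, x ≠ y ∧ (G.neighborSet x).ncard = (G.neighborSet y).ncard ∧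
      1 ≤ (G.neighborSet x).ncard ∧ (G.Adj x y → 2 ≤ (G.neighborSet x).ncard) := by
  classical
  set d : V → ℕ := fun v => (G.neighborSet v).ncard with hdd
  set S : Finset V := Finset.univ.filter (fun v => 0 < d v) with hS
  have hmemS : ∀ {v : V}, v ∈ S ↔ 0 < d v := by
    intro v; simp [hS]
  have hnbrS : ∀ {u v : V}, G.Adj u v → v ∈ S := by
    intro u v h
    rw [hmemS]
    show 0 < (G.neighborSet v).ncard
    rw [Set.ncard_pos (Set.toFinite _)]
    exact ⟨u, h.symm⟩
  induction e₁ using Sym2.ind with | _ a b => ?_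
  induction e₂ using Sym2.ind with | _ c d' => ?_
  rw [SimpleGraph.mem_edgeSet] at he₁ he₂
  have h3 : 3 ≤ S.card := by
    by_contra hlt
    push_neg at hlt
    have hab : ({a, b} : Finset V) ⊆ S := by
      intro z hz
      simp only [Finset.mem_insert, Finset.mem_singleton] at hz
      rcases hz with rfl | rfl
      exacts [hnbrS he₁.symm, hnbrS he₁]
    have hcd : ({c, d'} : Finset V) ⊆ S := by
      intro z hz
      simp only [Finset.mem_insert, Finset.mem_singleton] at hz
      rcases hz with rfl | rfl
      exacts [hnbrS he₂.symm, hnbrS he₂]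
    have habc : ({a, b} : Finset V).card = 2 := Finset.card_pair he₁.ne
    have hcdc : ({c, d'} : Finset V).card = 2 := Finset.card_pair he₂.ne
    have h1 : ({a, b} : Finset V) = S := Finset.eq_of_subset_of_card_le hab (by omega)
    have h2 : ({c, d'} : Finset V) = S := Finset.eq_of_subset_of_card_le hcd (by omega)
    have hcin : c ∈ ({a, b} : Finset V) := by rw [h1, ← h2]; simp
    have hd'in : d' ∈ ({a, b} : Finset V) := by rw [h1, ← h2]; simp
    simp only [Finset.mem_insert, Finset.mem_singleton] at hcin hd'in
    apply hne
    rcases hcin with rfl | rfl <;> rcases hd'in with rfl | rfl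
    · exact absurd rfl he₂.ne
    · rfl
    · exact Sym2.eq_swap
    · exact absurd rfl he₂.ne.symm
  have hbound : ∀ T : Finset V, (∀ v ∈ T, (G.neighborSet v : Set V) ⊆ ↑T) →
      ∀ v ∈ T, d v ≤ T.card - 1 := by
    intro T hT v hv
    have hsub : G.neighborSet v ⊆ ↑(T.erase v) := by
      intro u hu
      simp only [Finset.coe_erase, Set.mem_diff, Set.mem_singleton_iff]
      exact ⟨hT v hv hu, fun h => G.irrefl (h ▸ (show G.Adj v u from hu).symm)⟩
    calc d v ≤ (↑(T.erase v) : Set V).ncard :=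
          Set.ncard_le_ncard hsub (Set.toFinite _)
      _ = (T.erase v).card := Set.ncard_coe_finset _
      _ = T.card - 1 := Finset.card_erase_of_mem hv
  have hSclosed : ∀ v ∈ S, (G.neighborSet v : Set V) ⊆ ↑S := by
    intro v _ u hu
    exact hnbrS (show G.Adj v u from hu)
  have hpig : ∃ x ∈ S, ∃ y ∈ S, x ≠ y ∧ d x = d y := by
    apply Finset.exists_ne_map_eq_of_card_lt_of_maps_to (t := Finset.Icc 1 (S.card - 1))
    · rw [Nat.card_Icc]; omega
    · intro v hv
      rw [Finset.mem_coe, Finset.mem_Icc]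
      exact ⟨hmemS.mp hv, hbound S hSclosed v hv⟩
  obtain ⟨x, hx, y, hy, hxy, hdxy⟩ := hpig
  by_cases hc : G.Adj x y ∧ d x = 1
  case neg =>
    refine ⟨x, y, hxy, hdxy, hmemS.mp hx, fun hadj => ?_⟩
    have hne1 : d x ≠ 1 := fun h => hc ⟨hadj, h⟩
    have hpos := hmemS.mp hx
    show 2 ≤ d x
    omega
  case pos =>
    obtain ⟨hadj, hd1⟩ := hc
    have hnx : G.neighborSet x = {y} := by
      obtain ⟨z, hz⟩ := Set.ncard_eq_one.mp (show (G.neighborSet x).ncard = 1 from hd1)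
      have hyz : y ∈ G.neighborSet x := hadj
      rw [hz] at hyz ⊢
      rw [Set.mem_singleton_iff] at hyz
      rw [hyz]
    have hny : G.neighborSet y = {x} := by
      have hd1y : (G.neighborSet y).ncard = 1 := by
        have : d y = 1 := by omega
        exact this
      obtain ⟨z, hz⟩ := Set.ncard_eq_one.mp hd1y
      have hxz : x ∈ G.neighborSet y := hadj.symm
      rw [hz] at hxz ⊢
      rw [Set.mem_singleton_iff] at hxz
      rw [hxz]
    set S' : Finset V := (S.erase x).erase y with hS'
    have hyex : y ∈ S.erase x := Finset.mem_erase.mpr ⟨Ne.symm hxy, hy⟩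
    have hS'card : S'.card = S.card - 2 := by
      rw [hS', Finset.card_erase_of_mem hyex, Finset.card_erase_of_mem hx]; omega
    have hmemS' : ∀ {v : V}, v ∈ S' ↔ v ≠ y ∧ v ≠ x ∧ v ∈ S := by
      intro v
      simp [hS', Finset.mem_erase, and_assoc]
    have hS'closed : ∀ v ∈ S', (G.neighborSet v : Set V) ⊆ ↑S' := by
      intro v hv u hu
      obtain ⟨hvy, hvx, hvS⟩ := hmemS'.mp hv
      refine hmemS'.mpr ⟨?_, ?_, hnbrS (show G.Adj v u from hu)⟩
      · rintro rfl
        have hvm : v ∈ G.neighborSet u := (show G.Adj v u from hu).symm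
        rw [hny] at hvm
        exact hvx (Set.mem_singleton_iff.mp hvm)
      · rintro rfl
        have hvm : v ∈ G.neighborSet u := (show G.Adj v u from hu).symm
        rw [hnx] at hvm
        exact hvy (Set.mem_singleton_iff.mp hvm)
    have hpig2 : ∃ x' ∈ S', ∃ y' ∈ S', x' ≠ y' ∧ d x' = d y' := by
      apply Finset.exists_ne_map_eq_of_card_lt_of_maps_to (t := Finset.Icc 1 (S'.card - 1))
      · rw [Nat.card_Icc]; omega
      · intro v hv
        rw [Finset.mem_coe, Finset.mem_Icc]
        exact ⟨hmemS.mp (hmemS'.mp hv).2.2, hbound S' hS'closed v hv⟩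
    obtain ⟨x', hx', y', hy', hxy', hdxy'⟩ := hpig2
    by_cases hc' : G.Adj x' y' ∧ d x' = 1
    case neg =>
      refine ⟨x', y', hxy', hdxy', hmemS.mp (hmemS'.mp hx').2.2, fun hadj' => ?_⟩
      have hne1 : d x' ≠ 1 := fun h => hc' ⟨hadj', h⟩
      have hpos := hmemS.mp (hmemS'.mp hx').2.2
      show 2 ≤ d x'
      omega
    case pos =>
      obtain ⟨_, hd1'⟩ := hc'
      refine ⟨x, x', Ne.symm (hmemS'.mp hx').2.1, show d x = d x' by omega,
        show 1 ≤ d x by omega, fun hadj2 => ?_⟩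
      exfalso
      have hxm : x' ∈ G.neighborSet x := hadj2
      rw [hnx] at hxm
      exact (hmemS'.mp hx').1 (Set.mem_singleton_iff.mp hxm)

end Aux2

section Aux3
variable {V : Type*} [Fintype V] (G : SimpleGraph V)

lemma exists_isolated_of_few_edges
    (h : ∀ e₁ ∈ G.edgeSet, ∀ e₂ ∈ G.edgeSet, e₁ = e₂) (h3 : 3 ≤ Fintype.card V) :
    ∃ u : V, ∀ v, ¬ G.Adj u v := by
  classical
  have hNE : Nonempty V := Fintype.card_pos_iff.mp (by omega)
  by_cases hE : ∃ e, e ∈ G.edgeSet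
  · obtain ⟨e, he⟩ := hE
    induction e using Sym2.ind with | _ a b => ?_
    rw [SimpleGraph.mem_edgeSet] at he
    have hu : ∃ u, u ∉ ({a, b} : Finset V) := by
      by_contra hcon
      push_neg at hcon
      have huniv : (Finset.univ : Finset V) ⊆ ({a, b} : Finset V) := fun z _ => hcon z
      have := Finset.card_le_card huniv
      have hle : ({a, b} : Finset V).card ≤ 2 :=
        (Finset.card_insert_le a {b}).trans (by simp)
      rw [Finset.card_univ] at this
      omega
    obtain ⟨u, hu⟩ := hu
    simp only [Finset.mem_insert, Finset.mem_singleton, not_or] at hu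
    refine ⟨u, fun v hadj => ?_⟩
    have := h s(u, v) (G.mem_edgeSet.mpr hadj) s(a, b) (G.mem_edgeSet.mpr he)
    rw [Sym2.eq_iff] at this
    rcases this with ⟨h1, _⟩ | ⟨h1, _⟩
    exacts [hu.1 h1, hu.2 h1]
  · push_neg at hE
    obtain ⟨u⟩ := hNE
    exact ⟨u, fun v hadj => hE s(u, v) (G.mem_edgeSet.mpr hadj)⟩

end Aux3


section Key
variable {V : Type*} [Fintype V] (G : SimpleGraph V)

lemma fd_key (h4 : 4 ≤ Fintype.card V) :
    (fd G ≤ Fintype.card V - 2 ∧ fd Gᶜ ≤ Fintype.card V - 2) ∨ fd G = 1 ∨ fd Gᶜ = 1 := by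
  have hNE : Nonempty V := Fintype.card_pos_iff.mp (by omega)
  by_cases hG : ∀ e₁ ∈ G.edgeSet, ∀ e₂ ∈ G.edgeSet, e₁ = e₂
  · right; right
    obtain ⟨u, hu⟩ := exists_isolated_of_few_edges G hG (by omega)
    exact fd_eq_one_of_universal Gᶜ u (fun v hv => ⟨Ne.symm hv, hu v⟩)
  · by_cases hGc : ∀ e₁ ∈ Gᶜ.edgeSet, ∀ e₂ ∈ Gᶜ.edgeSet, e₁ = e₂
    · right; left
      obtain ⟨u, hu⟩ := exists_isolated_of_few_edges Gᶜ hGc (by omega)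
      refine fd_eq_one_of_universal G u (fun v hv => ?_)
      have := hu v
      rw [SimpleGraph.compl_adj] at this
      push_neg at this
      exact this (Ne.symm hv)
    · left
      push_neg at hG hGc
      obtain ⟨e₁, he₁, e₂, he₂, hne⟩ := hG
      obtain ⟨f₁, hf₁, f₂, hf₂, hne'⟩ := hGc
      obtain ⟨x, y, hxy, hd, h1, h2⟩ := exists_good_pair G e₁ e₂ he₁ he₂ hne
      obtain ⟨x', y', hxy', hd', h1', h2'⟩ := exists_good_pair Gᶜ f₁ f₂ hf₁ hf₂ hne'
      exact ⟨pair_fd G x y hxy hd h1 h2, pair_fd Gᶜ x' y' hxy' hd' h1' h2'⟩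

end Key

/-- Nordhaus–Gaddum bounds: for a graph `G` on `n ≥ 5` vertices,
`3 ≤ fd(G) + fd(Ḡ) ≤ 2n - 4`, and for `n ≥ 4`, `2 ≤ fd(G)·fd(Ḡ) ≤ (n-2)²`. -/
theorem fd_nordhaus_gaddum {V : Type*} [Fintype V] (G : SimpleGraph V) (n : ℕ)
    (hn : Fintype.card V = n) :
    (5 ≤ n → 3 ≤ fd G + fd Gᶜ ∧ fd G + fd Gᶜ ≤ 2 * n - 4) ∧
    (4 ≤ n → 2 ≤ fd G * fd Gᶜ ∧ fd G * fd Gᶜ ≤ (n - 2) ^ 2) := by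
  constructor
  · intro h5
    have h4 : 4 ≤ Fintype.card V := by omega
    have hNE : Nonempty V := Fintype.card_pos_iff.mp (by omega)
    have ha := one_le_fd G
    have hb := one_le_fd Gᶜ
    have hnb := not_both_fd_one G (by omega)
    constructor
    · omega
    · rcases fd_key G h4 with ⟨hu1, hu2⟩ | h | h
      · rw [hn] at hu1 hu2; omega
      · have := fd_le_card Gᶜ; rw [hn] at this; omega
      · have := fd_le_card G; rw [hn] at this; omega
  · intro h4'
    have h4 : 4 ≤ Fintype.card V := by omega
    have hNE : Nonempty V := Fintype.card_pos_iff.mp (by omega)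
    have ha := one_le_fd G
    have hb := one_le_fd Gᶜ
    have hnb := not_both_fd_one G (by omega)
    constructor
    · have h2 : 2 ≤ fd G ∨ 2 ≤ fd Gᶜ := by omega
      rcases h2 with h | h
      · calc 2 ≤ fd G := h
          _ = fd G * 1 := (mul_one _).symm
          _ ≤ fd G * fd Gᶜ := Nat.mul_le_mul_left _ hb
      · calc 2 ≤ fd Gᶜ := h
          _ = 1 * fd Gᶜ := (one_mul _).symm
          _ ≤ fd G * fd Gᶜ := Nat.mul_le_mul_right _ ha
    · obtain ⟨m, rfl⟩ : ∃ m, n = m + 4 := ⟨n - 4, by omega⟩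
      have hsq : (m + 4 - 2) ^ 2 = m * m + 4 * m + 4 := by
        rw [show m + 4 - 2 = m + 2 from rfl]; ring
      rcases fd_key G h4 with ⟨hu1, hu2⟩ | h | h
      · rw [hn] at hu1 hu2
        calc fd G * fd Gᶜ ≤ (m + 4 - 2) * (m + 4 - 2) := Nat.mul_le_mul hu1 hu2
          _ = (m + 4 - 2) ^ 2 := (sq _).symm
      · have hble := fd_le_card Gᶜ
        rw [hn] at hble
        have : fd G * fd Gᶜ = fd Gᶜ := by rw [h, one_mul]
        omega
      · have hble := fd_le_card G
        rw [hn] at hble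
        have : fd G * fd Gᶜ = fd G := by rw [h, mul_one]
        omega
end

section
/- Let H be the disjoint union of k ≥ 1 graphs G₁,…,G_k and let n = |V(H)|. Then fd(H) − Σᵢ fd(Gᵢ) ≤ (k−1)(n−k)/k. -/
/-- The disjoint union of a family of graphs. -/
def disjointUnion {ι : Type*} {V : ι → Type*} (G : ∀ i, SimpleGraph (V i)) :
    SimpleGraph (Σ i, V i) :=
  SimpleGraph.fromRel (fun a b => ∃ h : a.1 = b.1, (G b.1).Adj (h ▸ a.2) b.2)

lemma adj_same {ι : Type*} {V : ι → Type*} (G : ∀ i, SimpleGraph (V i)) (i : ι) (u w : V i) :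
    (disjointUnion G).Adj ⟨i, u⟩ ⟨i, w⟩ ↔ (G i).Adj u w := by
  constructor
  · rintro ⟨hne, ⟨he, ha⟩ | ⟨he, ha⟩⟩
    · rwa [Subsingleton.elim he rfl] at ha
    · rw [Subsingleton.elim he rfl] at ha
      exact ha.symm
  · intro h
    exact ⟨by simp [h.ne], Or.inl ⟨rfl, h⟩⟩

lemma adj_diff {ι : Type*} {V : ι → Type*} (G : ∀ i, SimpleGraph (V i)) {i j : ι} (hij : i ≠ j)
    (u : V i) (w : V j) : ¬ (disjointUnion G).Adj ⟨i, u⟩ ⟨j, w⟩ := by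
  rintro ⟨hne, ⟨he, _⟩ | ⟨he, _⟩⟩
  · exact hij he
  · exact hij he.symm

lemma fdset_univ {V : Type*} (G : SimpleGraph V) : IsFDSet G Set.univ :=
  ⟨1, le_refl 1, fun v hv => absurd (Set.mem_univ v) hv, fun v hv => absurd (Set.mem_univ v) hv⟩

lemma fd_mem {V : Type*} (G : SimpleGraph V) :
    ∃ D : Set V, IsFDSet G D ∧ D.ncard = fd G :=
  Nat.sInf_mem (⟨Set.univ.ncard, Set.univ, fdset_univ G, rfl⟩ :
    {m | ∃ D : Set V, IsFDSet G D ∧ D.ncard = m}.Nonempty)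

lemma fd_pos {V : Type*} [Fintype V] [Nonempty V] (G : SimpleGraph V) : 1 ≤ fd G := by
  rw [Nat.one_le_iff_ne_zero]
  intro h0
  obtain ⟨D, ⟨κ, hκ, hdom, _⟩, hcard⟩ := fd_mem G
  rw [h0, Set.ncard_eq_zero (Set.toFinite D)] at hcard
  subst hcard
  obtain ⟨u, hu, -⟩ := hdom (Classical.arbitrary V) (Set.notMem_empty _)
  exact hu

lemma key {ι : Type*} [DecidableEq ι] {V : ι → Type*} [∀ i, Fintype (V i)] [Fintype ι]
    (G : ∀ i, SimpleGraph (V i)) (i : ι) (D : Set (V i)) (hD : IsFDSet (G i) D) :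
    ∃ E : Set (Σ j, V j), IsFDSet (disjointUnion G) E ∧
      E.ncard + Fintype.card (V i) = Fintype.card (Σ j, V j) + D.ncard := by
  obtain ⟨κ, hκ, hdom, hcnt⟩ := hD
  set E : Set (Σ j, V j) := (Sigma.mk i '' Dᶜ)ᶜ with hE
  have hmemE : ∀ u : V i, (⟨i, u⟩ : Σ j, V j) ∈ E ↔ u ∈ D := by
    intro u
    simp only [hE, Set.mem_compl_iff, Set.mem_image, not_exists, not_and]
    constructor
    · intro h
      by_contra hu
      exact h u hu rfl
    · rintro hu w hw heq
      obtain rfl := sigma_mk_injective heq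
      exact hw hu
  have hmemE' : ∀ j, ∀ u : V j, j ≠ i → (⟨j, u⟩ : Σ j, V j) ∈ E := by
    rintro j u hj ⟨w, hw, heq⟩
    exact hj (congrArg Sigma.fst heq).symm
  have hnotE : ∀ x : Σ j, V j, x ∉ E → ∃ w : V i, w ∉ D ∧ x = ⟨i, w⟩ := by
    intro x hx
    have hx' : x ∈ Sigma.mk i '' Dᶜ := by simpa [hE] using hx
    obtain ⟨w, hw, rfl⟩ := hx'
    exact ⟨w, hw, rfl⟩
  refine ⟨E, ⟨κ, hκ, ?_, ?_⟩, ?_⟩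
  · intro v hv
    obtain ⟨w, hw, rfl⟩ := hnotE v hv
    obtain ⟨u, hu, hadj⟩ := hdom w hw
    exact ⟨⟨i, u⟩, (hmemE u).2 hu, (adj_same G i u w).2 hadj⟩
  · intro v hv
    obtain ⟨w, hw, rfl⟩ := hnotE v hv
    have hset : (disjointUnion G).neighborSet ⟨i, w⟩ ∩ E =
        Sigma.mk i '' ((G i).neighborSet w ∩ D) := by
      ext x
      constructor
      · rintro ⟨hx1, hx2⟩
        obtain ⟨j, u⟩ := x
        rcases eq_or_ne j i with rfl | hji
        · exact ⟨u, ⟨(adj_same G j w u).1 hx1, (hmemE u).1 hx2⟩, rfl⟩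
        · exact absurd hx1 (adj_diff G hji.symm w u)
      · rintro ⟨u, ⟨hu1, hu2⟩, rfl⟩
        exact ⟨(adj_same G i w u).2 hu1, (hmemE u).2 hu2⟩
    rw [hset, Set.ncard_image_of_injective _ sigma_mk_injective]
    exact hcnt w hw
  · have h1 : E.ncard + Eᶜ.ncard = Fintype.card (Σ j, V j) := by
      rw [Set.ncard_add_ncard_compl, Nat.card_eq_fintype_card]
    have h2 : D.ncard + Dᶜ.ncard = Fintype.card (V i) := by
      rw [Set.ncard_add_ncard_compl, Nat.card_eq_fintype_card]
    have h3 : Eᶜ.ncard = Dᶜ.ncard := by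
      rw [hE, compl_compl, Set.ncard_image_of_injective _ sigma_mk_injective]
    omega

/-- If `H` is the disjoint union of `k ≥ 1` graphs `G₁, …, G_k` and `n = |V(H)|`, then
`fd(H) - ∑ᵢ fd(Gᵢ) ≤ (k-1)(n-k)/k`. -/
theorem fd_disjointUnion_le {k : ℕ} (hk : 1 ≤ k) {V : Fin k → Type*}
    [∀ i, Fintype (V i)] [∀ i, Nonempty (V i)] (G : ∀ i, SimpleGraph (V i))
    (n : ℕ) (hn : Fintype.card (Σ i, V i) = n) :
    (fd (disjointUnion G) : ℚ) - ∑ i, (fd (G i) : ℚ) ≤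
      ((k : ℚ) - 1) * ((n : ℚ) - k) / k := by
  have hne : Nonempty (Fin k) := ⟨⟨0, hk⟩⟩
  -- pick i maximizing card (V i)
  obtain ⟨i, -, hi⟩ := Finset.exists_max_image Finset.univ
    (fun j => Fintype.card (V j)) Finset.univ_nonempty
  have hsumcard : ∑ j, Fintype.card (V j) = n := by
    rw [← Fintype.card_sigma, hn]
  have hkn : n ≤ k * Fintype.card (V i) := by
    calc n = ∑ j, Fintype.card (V j) := hsumcard.symm
    _ ≤ ∑ _j : Fin k, Fintype.card (V i) :=
        Finset.sum_le_sum (fun j hj => hi j hj)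
    _ = k * Fintype.card (V i) := by simp [Finset.sum_const, mul_comm]
  obtain ⟨D, hD, hDcard⟩ := fd_mem (G i)
  obtain ⟨E, hE, hEcard⟩ := key G i D hD
  have hfd : fd (disjointUnion G) ≤ E.ncard := Nat.sInf_le ⟨E, hE, rfl⟩
  -- sum lower bound
  have hsum : fd (G i) + (k - 1) ≤ ∑ j, fd (G j) := by
    have h1 : ∑ j, fd (G j) = fd (G i) + ∑ j ∈ Finset.univ.erase i, fd (G j) := by
      exact (Finset.add_sum_erase _ _ (Finset.mem_univ i)).symm
    have h2 : k - 1 ≤ ∑ j ∈ Finset.univ.erase i, fd (G j) := by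
      calc k - 1 = (Finset.univ.erase i).card := by
            rw [Finset.card_erase_of_mem (Finset.mem_univ i), Finset.card_univ,
              Fintype.card_fin]
        _ = ∑ _j ∈ Finset.univ.erase i, 1 := by simp
        _ ≤ _ := Finset.sum_le_sum (fun j _ => fd_pos (G j))
    omega
  -- cast everything to ℚ
  have hkQ : (0 : ℚ) < k := by exact_mod_cast hk
  rw [le_div_iff₀ hkQ]
  have c1 : (fd (disjointUnion G) : ℚ) ≤ E.ncard := by exact_mod_cast hfd
  have c2 : (E.ncard : ℚ) + Fintype.card (V i) = n + D.ncard := by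
    have := hEcard
    rw [hn] at this
    exact_mod_cast this
  have c3 : (fd (G i) : ℚ) + ((k : ℚ) - 1) ≤ ∑ j, (fd (G j) : ℚ) := by
    have : ((fd (G i) + (k - 1) : ℕ) : ℚ) ≤ ((∑ j, fd (G j) : ℕ) : ℚ) := by
      exact_mod_cast hsum
    push_cast [Nat.cast_sub hk] at this
    exact this
  have c4 : (n : ℚ) ≤ k * Fintype.card (V i) := by exact_mod_cast hkn
  have c5 : (D.ncard : ℚ) = fd (G i) := by exact_mod_cast hDcard
  nlinarith [c1, c2, c3, c4, c5, hkQ]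
end
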